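/- The superoperator I − N fails to be invertible exactly when there are eigenvectors of U avoiding the final vertex: the linear map Φ on the space of linear operators on V defined by Φ(X) = X − Q_f U X U† Q_f has a nontrivial kernel if and only if there exist a nonzero vector v ∈ V and a scalar μ ∈ ℂ such that U v = μ v and P_f v = 0. -/

import Mathlib

/-!
Write `Q_f = 1 - P_f` and `T = Q_f U`, a contraction with `T† = U† Q_f`, so that
`Φ(X) = X - T X T†`. If `T v = μ v` with `|μ| = 1`, the rank-one operator `|v⟩⟨v|` is fixed by
`X ↦ T X T†`. Conversely, a nonzero fixed point `X = Tⁿ X T†ⁿ` forces `‖Tⁿ‖ ≥ 1` for all `n`, so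
by Gelfand's formula `T` has spectral radius `1`, hence (in finite dimension) an eigenvalue `μ`
with `|μ| = 1`. Finally, `‖Q_f U v‖ = ‖v‖ = ‖U v‖` means that `U v` lies in the range of `Q_f`,
so `Q_f U v = μ v` says exactly that `U v = μ v` and `P_f v = 0`.
-/

open Filter InnerProductSpace

theorem one_le_norm_pow_of_mul_mul_eq_self {A : Type*} [NormedRing A] [NormOneClass A]
    {a b x : A} (hx : x ≠ 0) (hb : ‖b‖ ≤ 1) (h : a * x * b = x) (n : ℕ) :
    1 ≤ ‖a ^ n‖ := by
  have hfix : a ^ n * x * b ^ n = x := by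
    induction n with
    | zero => simp
    | succ n ih =>
      rw [pow_succ', pow_succ, show a * a ^ n * x * (b ^ n * b) = a * (a ^ n * x * b ^ n) * b by
        noncomm_ring, ih, h]
  refine le_of_mul_le_mul_right ?_ (norm_pos_iff.mpr hx)
  calc 1 * ‖x‖ = ‖a ^ n * x * b ^ n‖ := by rw [hfix, one_mul]
    _ ≤ ‖a ^ n‖ * ‖x‖ * ‖b‖ ^ n := by grw [norm_mul_le, norm_mul_le, norm_pow_le b n]
    _ ≤ ‖a ^ n‖ * ‖x‖ := by grw [pow_le_one₀ (norm_nonneg b) hb, mul_one]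

theorem spectrum.exists_one_le_norm_of_one_le_norm_pow {A : Type*} [NormedRing A]
    [NormedAlgebra ℂ A] [CompleteSpace A] [Nontrivial A] {a : A} (h : ∀ n : ℕ, 1 ≤ ‖a ^ n‖) :
    ∃ μ ∈ spectrum ℂ a, 1 ≤ ‖μ‖ := by
  obtain ⟨μ, hμ, hμa⟩ := spectrum.exists_nnnorm_eq_spectralRadius a
  refine ⟨μ, hμ, ?_⟩
  have hrad : 1 ≤ spectralRadius ℂ a := by
    refine ge_of_tendsto (spectrum.pow_nnnorm_pow_one_div_tendsto_nhds_spectralRadius a)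
      (eventually_atTop.2 ⟨1, fun n hn => ENNReal.one_le_rpow ?_ (by positivity)⟩)
    exact_mod_cast h n
  rw [← hμa] at hrad
  exact_mod_cast hrad

theorem LinearMap.norm_map_of_mem_unitary {𝕜 E : Type*} [RCLike 𝕜] [NormedAddCommGroup E]
    [InnerProductSpace 𝕜 E] [FiniteDimensional 𝕜 E] {U : E →ₗ[𝕜] E}
    (hU : U ∈ unitary (E →ₗ[𝕜] E)) (x : E) : ‖U x‖ = ‖x‖ :=
  (LinearMap.norm_map_iff_inner_map_map U).mpr (fun x y => by
    rw [← LinearMap.adjoint_inner_right, ← Module.End.mul_apply, ← LinearMap.star_eq_adjoint,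
      Unitary.star_mul_self_of_mem hU, Module.End.one_apply]) x

theorem Submodule.starProjection_apply_eq_smul_iff {𝕜 E : Type*} [RCLike 𝕜]
    [NormedAddCommGroup E] [InnerProductSpace 𝕜 E] {K : Submodule 𝕜 E} [K.HasOrthogonalProjection]
    {U : E →ₗ[𝕜] E} (hU : ∀ x, ‖U x‖ = ‖x‖) {v : E} {μ : 𝕜} (hμ : ‖μ‖ = 1) :
    K.starProjection (U v) = μ • v ↔ U v = μ • v ∧ v ∈ K := by
  constructor
  · intro h
    have hUv_mem : U v ∈ K := by
      rw [K.mem_iff_norm_starProjection, h, norm_smul, hμ, one_mul, hU]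
    have hUv : U v = μ • v := by rw [← h, K.starProjection_eq_self_iff.mpr hUv_mem]
    have hμ0 : μ ≠ 0 := by rintro rfl; simp at hμ
    refine ⟨hUv, ?_⟩
    simpa [hUv, smul_smul, inv_mul_cancel₀ hμ0] using K.smul_mem μ⁻¹ hUv_mem
  · rintro ⟨hUv, hv⟩
    rw [hUv, map_smul, K.starProjection_eq_self_iff.mpr hv]

namespace LinearMap

variable {V : Type*} [NormedAddCommGroup V] [InnerProductSpace ℂ V] [FiniteDimensional ℂ V]

theorem mul_rankOne_mul_adjoint_eq_self {T : V →ₗ[ℂ] V} {v : V} {μ : ℂ} (hμ : ‖μ‖ = 1)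
    (hv : T v = μ • v) : T * (rankOne ℂ v v : V →ₗ[ℂ] V) * adjoint T = rankOne ℂ v v := by
  ext w
  simp only [Module.End.mul_apply, ContinuousLinearMap.coe_coe, rankOne_apply,
    adjoint_inner_right, map_smul, hv, inner_smul_left, smul_smul]
  rw [mul_right_comm, RCLike.conj_mul, hμ]
  simp

theorem exists_eigenvector_norm_eq_one_of_mul_mul_adjoint_eq_self {T X : V →ₗ[ℂ] V}
    (hT : ∀ v, ‖T v‖ ≤ ‖v‖) (hX : X ≠ 0) (h : T * X * adjoint T = X) :
    ∃ (v : V) (μ : ℂ), v ≠ 0 ∧ ‖μ‖ = 1 ∧ T v = μ • v := by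
  have : CompleteSpace V := FiniteDimensional.complete ℂ V
  have : Nontrivial V := by
    by_contra hV
    rw [not_nontrivial_iff_subsingleton] at hV
    exact hX (Subsingleton.elim _ _)
  let e := Module.End.toContinuousLinearMap (𝕜 := ℂ) V
  have he_adjoint : e (adjoint T) = ContinuousLinearMap.adjoint (e T) :=
    adjoint_toContinuousLinearMap T
  have hadjoint_norm : ‖ContinuousLinearMap.adjoint (e T)‖ ≤ 1 := by
    rw [LinearIsometryEquiv.norm_map]
    exact ContinuousLinearMap.opNorm_le_bound _ zero_le_one fun v => by rw [one_mul]; exact hT v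
  have hpow := one_le_norm_pow_of_mul_mul_eq_self (a := e T) (x := e X)
    ((map_ne_zero_iff e e.injective).mpr hX) hadjoint_norm
    (by rw [← he_adjoint, ← map_mul, ← map_mul, h])
  obtain ⟨μ, hμ, hμ_ge⟩ := spectrum.exists_one_le_norm_of_one_le_norm_pow hpow
  rw [AlgEquiv.spectrum_eq, ← Module.End.hasEigenvalue_iff_mem_spectrum] at hμ
  obtain ⟨v, hv⟩ := hμ.exists_hasEigenvector
  refine ⟨v, μ, hv.2, le_antisymm ?_ hμ_ge, hv.apply_eq_smul⟩
  have hTv := hT v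
  rw [hv.apply_eq_smul, norm_smul] at hTv
  exact (mul_le_iff_le_one_left (norm_pos_iff.mpr hv.2)).mp hTv

theorem exists_ne_zero_mul_mul_adjoint_eq_self_iff {T : V →ₗ[ℂ] V} (hT : ∀ v, ‖T v‖ ≤ ‖v‖) :
    (∃ X : V →ₗ[ℂ] V, X ≠ 0 ∧ T * X * adjoint T = X) ↔
      ∃ (v : V) (μ : ℂ), v ≠ 0 ∧ ‖μ‖ = 1 ∧ T v = μ • v := by
  refine ⟨fun ⟨X, hX, h⟩ => exists_eigenvector_norm_eq_one_of_mul_mul_adjoint_eq_self hT hX h, ?_⟩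
  rintro ⟨v, μ, hv, hμ, hTv⟩
  exact ⟨rankOne ℂ v v, fun h =>
    rankOne_ne_zero (𝕜 := ℂ) hv hv (ContinuousLinearMap.coe_injective h),
    mul_rankOne_mul_adjoint_eq_self hμ hTv⟩

end LinearMap

/-- The superoperator `Φ(X) = X - Q_f U X U† Q_f` (with `Q_f = 1 - P_f`) on `End(V)`
has a nontrivial kernel if and only if there is a nonzero eigenvector of `U`
having no overlap with the final vertex, i.e. `U v = μ v` and `P_f v = 0`. -/
theorem superoperator_not_injective_iff_eigenvector_avoiding_final_vertex
    {V : Type*} [NormedAddCommGroup V] [InnerProductSpace ℂ V] [FiniteDimensional ℂ V]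
    (U Pf : V →ₗ[ℂ] V)
    (hU : U ∈ unitary (V →ₗ[ℂ] V))
    (hPf_idem : Pf * Pf = Pf) (hPf_sa : LinearMap.adjoint Pf = Pf) :
    (∃ X : V →ₗ[ℂ] V, X ≠ 0 ∧
        X - (1 - Pf) * U * X * LinearMap.adjoint U * (1 - Pf) = 0) ↔
      (∃ (v : V) (μ : ℂ), v ≠ 0 ∧ U v = μ • v ∧ Pf v = 0) := by
  have hT_adjoint : LinearMap.adjoint ((1 - Pf) * U) = LinearMap.adjoint U * (1 - Pf) := by
    rw [← LinearMap.star_eq_adjoint, star_mul, ((IsSelfAdjoint.one _).sub hPf_sa).star_eq,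
      LinearMap.star_eq_adjoint]
  have hΦ (X : V →ₗ[ℂ] V) : X - (1 - Pf) * U * X * LinearMap.adjoint U * (1 - Pf) = 0 ↔
      (1 - Pf) * U * X * LinearMap.adjoint ((1 - Pf) * U) = X := by
    rw [sub_eq_zero, eq_comm, hT_adjoint]
    simp only [mul_assoc]
  obtain ⟨K, _, rfl⟩ := LinearMap.isSymmetricProjection_iff_eq_coe_starProjection.mp
    ⟨hPf_idem, (LinearMap.isSymmetric_iff_isSelfAdjoint _).mpr hPf_sa⟩
  have hQ : 1 - (K.starProjection : V →ₗ[ℂ] V) = Kᗮ.starProjection := by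
    rw [K.starProjection_orthogonal']; rfl
  have hU_norm := LinearMap.norm_map_of_mem_unitary hU
  simp_rw [hΦ, hQ]
  rw [LinearMap.exists_ne_zero_mul_mul_adjoint_eq_self_iff fun v =>
    (Kᗮ.norm_starProjection_apply_le (U v)).trans (hU_norm v).le]
  refine exists_congr fun v => exists_congr fun μ => and_congr_right fun hv => ?_
  simp only [Module.End.mul_apply, ContinuousLinearMap.coe_coe, K.starProjection_apply_eq_zero_iff]
  constructor
  · rintro ⟨hμ, hQUv⟩
    exact (Kᗮ.starProjection_apply_eq_smul_iff hU_norm hμ).mp hQUv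
  · rintro ⟨hUv, hvK⟩
    have hμ : ‖μ‖ = 1 := by simpa [hUv, norm_smul, hv] using hU_norm v
    exact ⟨hμ, (Kᗮ.starProjection_apply_eq_smul_iff hU_norm hμ).mpr ⟨hUv, hvK⟩⟩
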